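/- arXiv:1211.4093 — 3 statements merged into one kernel-verified Lean document; each statement's English description precedes it below -/
import Mathlib

section
/- Fairness projection lemma: Let P be a pathway, comp : species(P) → I a component map and J ⊆ I. If a maximal path π of LTS(P) is fair (π ⊨ Φ), then both π↾J and π↾∞J are abstractly fair: for every R ∈ PR, if R is enabled at infinitely many positions of the projected sequence then infinitely many of its steps are labelled R. -/
open scoped Classical

/-- A reaction: a triple of finite sets of species (reactants, products, catalysts). -/
structure Reaction (S : Type*) where
  re : Finset S
  pro : Finset S
  cat : Finset S

namespace Reaction
/-- The species involved in a reaction. -/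
def speciesSet {S : Type*} (R : Reaction S) : Set S := ↑R.re ∪ ↑R.pro ∪ ↑R.cat
end Reaction

variable {S I : Type*}

/-- A reaction is enabled at a state. -/
def enabled (R : Reaction S) (s : Set S) : Prop :=
  ↑R.re ⊆ s ∧ ¬ (↑R.pro : Set S) ⊆ s ∧ ↑R.cat ⊆ s

/-- The transition relation of the LTS: rule (cat) and rule (no-cat). -/
def Step (R : Reaction S) (s s' : Set S) : Prop :=
  (↑R.re ⊆ s ∧ ¬ (↑R.pro : Set S) ⊆ s ∧ R.cat ≠ ∅ ∧ ↑R.cat ⊆ s ∧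
      s' = (s \ ↑R.re) ∪ ↑R.pro) ∨
  (↑R.re ⊆ s ∧ ¬ (↑R.pro : Set S) ⊆ s ∧ R.cat = ∅ ∧ s' = s ∪ ↑R.pro)

/-- The species of a pathway. -/
def pathwaySpecies (P : Finset (Reaction S)) : Set S := ⋃ R ∈ P, R.speciesSet

/-- The set of components of a reaction: the image of its species under `comp`. -/
def compSet (comp : S → I) (R : Reaction S) : Set I := comp '' R.speciesSet

/-- species(J): all species of reactions having some component in J. -/
def speciesJ (P : Finset (Reaction S)) (comp : S → I) (J : Set I) : Set S :=
  {s | ∃ R ∈ P, (compSet comp R ∩ J).Nonempty ∧ s ∈ R.speciesSet}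

/-- Projection of a set of species onto J. -/
def projSet (P : Finset (Reaction S)) (comp : S → I) (J : Set I) (u : Set S) : Set S :=
  u ∩ speciesJ P comp J

/-- Projection of a finite set of species onto J. -/
noncomputable def projFin (P : Finset (Reaction S)) (comp : S → I) (J : Set I)
    (u : Finset S) : Finset S :=
  u.filter (· ∈ speciesJ P comp J)

/-- PR: the reactions of P all of whose components are in J. -/
def PR (P : Finset (Reaction S)) (comp : S → I) (J : Set I) : Set (Reaction S) :=
  {R | R ∈ P ∧ compSet comp R ⊆ J}

/-- The projected version of a reaction. -/
noncomputable def projReaction (P : Finset (Reaction S)) (comp : S → I) (J : Set I)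
    (R : Reaction S) : Reaction S :=
  ⟨projFin P comp J R.re, projFin P comp J R.pro, projFin P comp J R.cat⟩

/-- The self-loop version of a projected reaction. -/
noncomputable def loopReaction (P : Finset (Reaction S)) (comp : S → I) (J : Set I)
    (R : Reaction S) : Reaction S :=
  ⟨projFin P comp J R.re, projFin P comp J R.re, projFin P comp J R.cat⟩

/-- AR: the abstract reactions coming from reactions crossing the boundary of J. -/
def AR (P : Finset (Reaction S)) (comp : S → I) (J : Set I) : Set (Reaction S) :=
  {R' | ∃ R ∈ P, (compSet comp R ∩ J).Nonempty ∧ (compSet comp R ∩ Jᶜ).Nonempty ∧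
        (R' = projReaction P comp J R ∨ R' = loopReaction P comp J R)}

/-- A finite or infinite alternating sequence of states and (optional) reaction labels.
`len` is the number of steps (`⊤` for infinite); states live at positions `≤ len`,
labels at positions `< len`.  A label `none` denotes a stuttering step `*`. -/
structure RPath (S : Type*) where
  len : ℕ∞
  state : ℕ → Set S
  label : ℕ → Option (Reaction S)

/-- π is a path of the LTS of the set of reactions Q. -/
def IsPath (Q : Set (Reaction S)) (π : RPath S) : Prop :=
  ∀ i : ℕ, (i : ℕ∞) < π.len →
    ∃ R, π.label i = some R ∧ R ∈ Q ∧ Step R (π.state i) (π.state (i + 1))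

/-- π is a maximal path of the LTS of Q. -/
def IsMaximal (Q : Set (Reaction S)) (π : RPath S) : Prop :=
  IsPath Q π ∧
    (π.len = ⊤ ∨ ∃ n : ℕ, π.len = (n : ℕ∞) ∧ ∀ R ∈ Q, ¬ enabled R (π.state n))

/-- Fairness with respect to the reactions in Q: every reaction of Q enabled at
infinitely many positions occurs at infinitely many steps. -/
def FairFor (Q : Set (Reaction S)) (π : RPath S) : Prop :=
  ∀ R ∈ Q, {i : ℕ | (i : ℕ∞) ≤ π.len ∧ enabled R (π.state i)}.Infinite →
    {i : ℕ | (i : ℕ∞) < π.len ∧ π.label i = some R}.Infinite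
/-- Step i of π is kept by the projection onto J. -/
def keptStep (comp : S → I) (J : Set I) (π : RPath S) (i : ℕ) : Prop :=
  (i : ℕ∞) < π.len ∧ ∃ R, π.label i = some R ∧ (compSet comp R ∩ J).Nonempty

/-- The projection π↾J of a path: steps labelled by reactions with no component in J
are deleted and the remaining states are projected onto J. -/
noncomputable def projPath (P : Finset (Reaction S)) (comp : S → I) (J : Set I)
    (π : RPath S) : RPath S :=
  if {i | keptStep comp J π i}.Infinite then
    ⟨⊤, fun n => projSet P comp J (π.state (Nat.nth (keptStep comp J π) n)),
        fun n => π.label (Nat.nth (keptStep comp J π) n)⟩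
  else
    let m := {i | keptStep comp J π i}.ncard
    let endIdx : ℕ :=
      if π.len = ⊤ then (if m = 0 then 0 else Nat.nth (keptStep comp J π) (m - 1) + 1)
      else π.len.toNat
    ⟨(m : ℕ∞),
     fun n => projSet P comp J
       (π.state (if n < m then Nat.nth (keptStep comp J π) n else endIdx)),
     fun n => if n < m then π.label (Nat.nth (keptStep comp J π) n) else none⟩

/-- π↾∞J: if π↾J is finite, extend it with infinitely many stuttering steps
(labelled by the non-reaction symbol `*`, represented by `none`). -/
noncomputable def infExtend (π : RPath S) : RPath S :=
  if π.len = ⊤ then π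
  else ⟨⊤, fun n => π.state (min n π.len.toNat),
          fun n => if (n : ℕ∞) < π.len then π.label n else none⟩

/-- A finite or infinite sequence belongs to the LTS of Q iff every step labelled by a
reaction is a transition of that LTS, every stuttering step repeats the current state,
and the sequence is infinite or ends in a state at which no reaction of Q is enabled. -/
def BelongsTo (Q : Set (Reaction S)) (π : RPath S) : Prop :=
  (∀ i : ℕ, (i : ℕ∞) < π.len →
      (∀ R, π.label i = some R → R ∈ Q ∧ Step R (π.state i) (π.state (i + 1))) ∧
      (π.label i = none → π.state (i + 1) = π.state i)) ∧
  (π.len = ⊤ ∨ ∃ n : ℕ, π.len = (n : ℕ∞) ∧ ∀ R ∈ Q, ¬ enabled R (π.state n))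

/-- ACTL⁻ formulas. -/
inductive ACTL (S : Type*) where
  | tt : ACTL S
  | ff : ACTL S
  | atom (s : S) : ACTL S
  | natom (s : S) : ACTL S
  | and (f g : ACTL S) : ACTL S
  | or (f g : ACTL S) : ACTL S
  | au (f g : ACTL S) : ACTL S
  | auw (f g : ACTL S) : ACTL S

/-- The atomic propositions occurring in an ACTL⁻ formula. -/
def atoms {S : Type*} : ACTL S → Set S
  | .tt => ∅
  | .ff => ∅
  | .atom s => {s}
  | .natom s => {s}
  | .and f g => atoms f ∪ atoms g
  | .or f g => atoms f ∪ atoms g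
  | .au f g => atoms f ∪ atoms g
  | .auw f g => atoms f ∪ atoms g

/-- Satisfaction of an ACTL⁻ formula at a state, relative to a set `D` of designated
maximal paths: path quantifiers range over the paths of `D` starting at the state. -/
def Sat {S : Type*} (D : Set (RPath S)) : ACTL S → Set S → Prop
  | .tt, _ => True
  | .ff, _ => False
  | .atom a, t => a ∈ t
  | .natom a, t => a ∉ t
  | .and f g, t => Sat D f t ∧ Sat D g t
  | .or f g, t => Sat D f t ∨ Sat D g t
  | .au f g, t => ∀ π ∈ D, π.state 0 = t →
      ∃ m : ℕ, (m : ℕ∞) ≤ π.len ∧ Sat D g (π.state m) ∧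
        ∀ m' < m, Sat D f (π.state m')
  | .auw f g, t => ∀ π ∈ D, π.state 0 = t →
      ∀ m : ℕ, (m : ℕ∞) ≤ π.len →
        (∀ m' < m, ¬ Sat D g (π.state m')) → Sat D f (π.state m)

/-- The suffix of a path starting at its k-th state. -/
def suffixPath (π : RPath S) (k : ℕ) : RPath S :=
  ⟨π.len - (k : ℕ∞), fun n => π.state (k + n), fun n => π.label (k + n)⟩

/-! Enabledness of a reaction of `PR` only depends on the `J`-part of the state, which the
projection preserves. If `π` has infinitely many kept steps, a reaction of `PR` enabled infinitely
often in `π↾J` is so in `π`, fires infinitely often by fairness, and each of its firings is kept.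
Otherwise `π↾J` is finite, hence trivially fair, and `π↾∞J` is fair as soon as no reaction of `PR`
is enabled at the final state. If `π` is finite this is maximality. If `π` is infinite, after the
last kept step only reactions disjoint from `J` fire, so the `J`-part of the state freezes; a
reaction of `PR` enabled there would stay enabled, fire by fairness, and that firing is kept. -/

namespace Reaction

variable {S : Type*} (R : Reaction S)

lemma re_subset_speciesSet : (↑R.re : Set S) ⊆ R.speciesSet :=
  Set.subset_union_left.trans Set.subset_union_left

lemma pro_subset_speciesSet : (↑R.pro : Set S) ⊆ R.speciesSet :=
  Set.subset_union_right.trans Set.subset_union_left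

lemma cat_subset_speciesSet : (↑R.cat : Set S) ⊆ R.speciesSet :=
  Set.subset_union_right

end Reaction

section Reactions

variable {S I : Type*} {R : Reaction S} {s t s' : Set S}

lemma enabled_congr (h : ∀ x ∈ R.speciesSet, x ∈ s ↔ x ∈ t) :
    enabled R s ↔ enabled R t := by
  have hsub : ∀ {u : Set S}, u ⊆ R.speciesSet → (u ⊆ s ↔ u ⊆ t) := fun hu =>
    ⟨fun hs x hx => (h x (hu hx)).1 (hs hx), fun ht x hx => (h x (hu hx)).2 (ht hx)⟩
  unfold enabled
  rw [hsub R.re_subset_speciesSet, hsub R.pro_subset_speciesSet,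
    hsub R.cat_subset_speciesSet]

lemma Step.mem_iff (h : Step R s s') {x : S} (hx : x ∉ R.speciesSet) : x ∈ s' ↔ x ∈ s := by
  have hre : x ∉ (↑R.re : Set S) := fun h => hx (R.re_subset_speciesSet h)
  have hpro : x ∉ (↑R.pro : Set S) := fun h => hx (R.pro_subset_speciesSet h)
  rcases h with ⟨-, -, -, -, rfl⟩ | ⟨-, -, -, rfl⟩ <;> simp [hre, hpro]

lemma compSet_inter_nonempty_of_enabled {comp : S → I} {J : Set I}
    (hRJ : compSet comp R ⊆ J) (hen : enabled R s) : (compSet comp R ∩ J).Nonempty := by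
  obtain ⟨x, hx, -⟩ := Set.not_subset.1 hen.2.1
  have hxR : comp x ∈ compSet comp R := ⟨x, R.pro_subset_speciesSet hx, rfl⟩
  exact ⟨comp x, hxR, hRJ hxR⟩

lemma enabled_projSet_iff {P : Finset (Reaction S)} {comp : S → I} {J : Set I} (hR : R ∈ P)
    (hRJ : (compSet comp R ∩ J).Nonempty) : enabled R (projSet P comp J s) ↔ enabled R s :=
  enabled_congr fun x hx => by
    have hxJ : x ∈ speciesJ P comp J := ⟨R, hR, hRJ, hx⟩
    simp [projSet, hxJ]

end Reactions

section Paths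

variable {S : Type*} {Q : Set (Reaction S)} {π : RPath S}

lemma fairFor_of_len_ne_top (h : π.len ≠ ⊤) : FairFor Q π := by
  obtain ⟨k, hk⟩ := ENat.ne_top_iff_exists.1 h
  intro R _ hen
  refine absurd ((Set.finite_Iic k).subset fun i hi => ?_) hen
  simpa [← hk] using hi.1

lemma infExtend_of_len_eq_top (h : π.len = ⊤) : infExtend π = π := if_pos h

lemma infExtend_state_of_le {k n : ℕ} (hk : π.len = k) (hn : k ≤ n) :
    (infExtend π).state n = π.state k := by
  simp [infExtend, hk, min_eq_right hn]

lemma fairFor_infExtend {k : ℕ} (hk : π.len = k) (h : ∀ R ∈ Q, ¬ enabled R (π.state k)) :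
    FairFor Q (infExtend π) := by
  intro R hR hen
  obtain ⟨n, hn, hkn⟩ := hen.exists_gt k
  exact absurd (infExtend_state_of_le hk hkn.le ▸ hn.2) (h R hR)

lemma IsPath.mem_state_iff {x : S} (hπ : IsPath Q π) {E i : ℕ} (hEi : E ≤ i)
    (hi : (i : ℕ∞) ≤ π.len)
    (hx : ∀ j, E ≤ j → j < i → ∀ R, π.label j = some R → x ∉ R.speciesSet) :
    x ∈ π.state i ↔ x ∈ π.state E := by
  induction i, hEi using Nat.le_induction with
  | base => rfl
  | succ i hEi ih =>
    have hlt : (i : ℕ∞) < π.len := lt_of_lt_of_le (by exact_mod_cast i.lt_succ_self) hi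
    obtain ⟨R, hlab, -, hstep⟩ := hπ i hlt
    rw [hstep.mem_iff (hx i hEi i.lt_succ_self R hlab)]
    exact ih hlt.le fun j hEj hji => hx j hEj (hji.trans i.lt_succ_self)

end Paths

section Projection

variable {S I : Type*} {P : Finset (Reaction S)} {comp : S → I} {J : Set I} {π : RPath S}

/-- The index `endIdx` of `projPath`: the position of `π` whose projection is the final state
of a finite `π↾J`. -/
noncomputable def projEnd (comp : S → I) (J : Set I) (π : RPath S) : ℕ :=
  if π.len = ⊤ then
    (if {i | keptStep comp J π i}.ncard = 0 then 0
     else Nat.nth (keptStep comp J π) ({i | keptStep comp J π i}.ncard - 1) + 1)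
  else π.len.toNat

lemma projPath_len_of_infinite (h : {i | keptStep comp J π i}.Infinite) :
    (projPath P comp J π).len = ⊤ := by
  simp [projPath, h]

lemma projPath_len_of_finite (h : ¬ {i | keptStep comp J π i}.Infinite) :
    (projPath P comp J π).len = {i | keptStep comp J π i}.ncard := by
  simp [projPath, h]

lemma projPath_state_of_finite (h : ¬ {i | keptStep comp J π i}.Infinite) :
    (projPath P comp J π).state {i | keptStep comp J π i}.ncard =
      projSet P comp J (π.state (projEnd comp J π)) := by
  simp [projPath, projEnd, h]

lemma projEnd_of_len_eq {k : ℕ} (hk : π.len = k) : projEnd comp J π = k := by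
  simp [projEnd, hk]

lemma not_keptStep_of_projEnd_le (htop : π.len = ⊤) (hfin : {i | keptStep comp J π i}.Finite)
    {j : ℕ} (hj : projEnd comp J π ≤ j) : ¬ keptStep comp J π j := by
  intro hkept
  have hm : {i | keptStep comp J π i}.ncard ≠ 0 := ((Set.ncard_pos hfin).2 ⟨j, hkept⟩).ne'
  have hcard : hfin.toFinset.card = {i | keptStep comp J π i}.ncard :=
    (Set.ncard_eq_toFinset_card _ hfin).symm
  obtain ⟨n, hn, rfl⟩ := Nat.exists_lt_card_finite_nth_eq hfin hkept
  change projEnd comp J π ≤ Nat.nth (keptStep comp J π) n at hj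
  have : Nat.nth (keptStep comp J π) n ≤
      Nat.nth (keptStep comp J π) ({i | keptStep comp J π i}.ncard - 1) :=
    Nat.nth_le_nth_of_lt_card hfin (by omega) (by omega)
  simp only [projEnd, htop, if_true, hm, if_false] at hj
  omega

lemma fairFor_projPath_of_infinite (hfair : FairFor (↑P) π)
    (hinf : {i | keptStep comp J π i}.Infinite) :
    FairFor (PR P comp J) (projPath P comp J π) := by
  intro R ⟨hRP, hRJ⟩ hen
  obtain ⟨n₀, hn₀⟩ := hen.nonempty
  have hne := compSet_inter_nonempty_of_enabled hRJ hn₀.2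
  rw [projPath, if_pos hinf] at hen ⊢
  have henπ : {i : ℕ | (i : ℕ∞) ≤ π.len ∧ enabled R (π.state i)}.Infinite := by
    refine (hen.image (Nat.nth_injective hinf).injOn).mono ?_
    rintro _ ⟨n, ⟨-, hn⟩, rfl⟩
    exact ⟨(Nat.nth_mem_of_infinite hinf n).1.le, (enabled_projSet_iff hRP hne).1 hn⟩
  have hkept : ∀ i ∈ {i : ℕ | (i : ℕ∞) < π.len ∧ π.label i = some R}, keptStep comp J π i :=
    fun i hi => ⟨hi.1, R, hi.2, hne⟩
  refine ((hfair R hRP henπ).image fun i hi j hj h =>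
    Nat.count_injective (hkept i hi) (hkept j hj) h).mono ?_
  rintro _ ⟨i, hi, rfl⟩
  refine ⟨WithTop.coe_lt_top _, ?_⟩
  change π.label (Nat.nth _ (Nat.count _ i)) = some R
  rw [Nat.nth_count (hkept i hi)]
  exact hi.2

lemma not_enabled_projEnd (hmax : IsMaximal (↑P) π) (hfair : FairFor (↑P) π)
    (hfin : {i | keptStep comp J π i}.Finite) {R : Reaction S} (hR : R ∈ PR P comp J) :
    ¬ enabled R (projSet P comp J (π.state (projEnd comp J π))) := by
  obtain ⟨hRP, hRJ⟩ := hR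
  obtain ⟨hpath, htop | ⟨k, hk, hdead⟩⟩ := hmax
  · intro hen
    have hne := compSet_inter_nonempty_of_enabled hRJ hen
    rw [enabled_projSet_iff hRP hne] at hen
    have hstable : ∀ i, projEnd comp J π ≤ i → enabled R (π.state i) := by
      intro i hi
      refine (enabled_congr fun x hx => hpath.mem_state_iff hi (htop ▸ le_top) ?_).2 hen
      intro j hj _ R' hlab hxR'
      exact not_keptStep_of_projEnd_le htop hfin hj
        ⟨htop ▸ WithTop.coe_lt_top j, R', hlab, comp x, ⟨x, hxR', rfl⟩, hRJ ⟨x, hx, rfl⟩⟩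
    have henπ : {i : ℕ | (i : ℕ∞) ≤ π.len ∧ enabled R (π.state i)}.Infinite :=
      (Set.Ici_infinite _).mono fun i hi => ⟨htop ▸ le_top, hstable i hi⟩
    obtain ⟨i, hi, hEi⟩ := (hfair R hRP henπ).exists_gt (projEnd comp J π)
    exact not_keptStep_of_projEnd_le htop hfin hEi.le ⟨hi.1, R, hi.2, hne⟩
  · rw [projEnd_of_len_eq hk]
    exact fun hen => hdead R hRP <|
      (enabled_projSet_iff hRP (compSet_inter_nonempty_of_enabled hRJ hen)).1 hen

end Projection

/-- **Fairness projection lemma.**  If a maximal path `π` of `LTS(P)` is fair, then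
both `π↾J` and `π↾∞J` are abstractly fair: for every `R ∈ PR`, if `R` is enabled at
infinitely many positions of the projected sequence then infinitely many of its
steps are labelled `R`. -/
theorem fairness_projection {S I : Type*} (P : Finset (Reaction S)) (comp : S → I)
    (J : Set I) (π : RPath S) (hmax : IsMaximal (↑P) π) (hfair : FairFor (↑P) π) :
    FairFor (PR P comp J) (projPath P comp J π) ∧
    FairFor (PR P comp J) (infExtend (projPath P comp J π)) := by
  by_cases hinf : {i | keptStep comp J π i}.Infinite
  · have hproj := fairFor_projPath_of_infinite (J := J) hfair hinf
    rw [infExtend_of_len_eq_top (projPath_len_of_infinite hinf)]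
    exact ⟨hproj, hproj⟩
  · have hlen := projPath_len_of_finite (P := P) hinf
    refine ⟨fairFor_of_len_ne_top (by simp [hlen]), fairFor_infExtend hlen fun R hR => ?_⟩
    rw [projPath_state_of_finite hinf]
    exact not_enabled_projEnd hmax hfair (Set.not_infinite.1 hinf) hR
end

section
/- Occurrences of internal reactions are preserved by path projection: Let P be a pathway, comp : species(P) → I a component map, J ⊆ I, and R ∈ P with comp(R) ⊆ J. For every path π of LTS(P), the steps of π labelled R are in order-preserving bijection with the steps of π↾J labelled R; in particular, infinitely many steps of π are labelled R if and only if infinitely many steps of π↾J are labelled R. -/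
open scoped Classical

variable {S I : Type*}

/-! A step labelled by `R` needs `pro(R) ⊄ s`, so `pro(R)` is nonempty and the step touches a
component of `J`; hence every occurrence of `R` is kept by the projection. The projection
enumerates the kept steps by `Nat.nth`, which is strictly monotone with inverse `Nat.count`
on them, and restricting this enumeration to the occurrences of `R` gives the order
isomorphism. -/

namespace Nat

variable {p : ℕ → Prop}

theorem forall_lt_card_of_lt_encard {n : ℕ} (h : (n : ℕ∞) < {i | p i}.encard) :
    ∀ hf : {i | p i}.Finite, n < hf.toFinset.card := fun hf => by
  rwa [hf.encard_eq_coe_toFinset_card, Nat.cast_lt] at h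

theorem nth_mem_of_lt_encard {n : ℕ} (h : (n : ℕ∞) < {i | p i}.encard) : p (nth p n) :=
  nth_mem n (forall_lt_card_of_lt_encard h)

theorem count_lt_encard [DecidablePred p] {n : ℕ} (hn : p n) :
    (count p n : ℕ∞) < {i | p i}.encard := by
  rcases Set.finite_or_infinite {i | p i} with hf | hf
  · rw [hf.encard_eq_coe_toFinset_card, Nat.cast_lt]
    exact count_lt_card hf hn
  · simp [hf.encard_eq]

noncomputable def nthOrderIsoOfLE {q : ℕ → Prop} (hqp : ∀ i, q i → p i) :
    {n : ℕ | (n : ℕ∞) < {i | p i}.encard ∧ q (nth p n)} ≃o {i | q i} :=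
  StrictMono.orderIsoOfSurjective (fun n => ⟨nth p n, n.2.2⟩)
    (fun _ n' h => nth_lt_nth' h (forall_lt_card_of_lt_encard n'.2.1))
    (fun i => ⟨⟨count p i, count_lt_encard (hqp i i.2), by rw [nth_count (hqp i i.2)]; exact i.2⟩,
      Subtype.ext (nth_count (hqp i i.2))⟩)

end Nat

theorem Step.pro_nonempty {R : Reaction S} {s s' : Set S} (h : Step R s s') : R.pro.Nonempty := by
  rw [Finset.nonempty_iff_ne_empty]
  rintro hpro
  rcases h with ⟨-, hnot, -⟩ | ⟨-, hnot, -⟩ <;> simp [hpro] at hnot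

theorem compSet_nonempty_of_step (comp : S → I) {R : Reaction S} {s s' : Set S}
    (h : Step R s s') : (compSet comp R).Nonempty :=
  let ⟨x, hx⟩ := h.pro_nonempty
  ⟨comp x, x, Or.inl (Or.inr hx), rfl⟩

def occurrences (π : RPath S) (R : Reaction S) : Set ℕ :=
  {i | (i : ℕ∞) < π.len ∧ π.label i = some R}

theorem keptStep_of_mem_occurrences {P : Finset (Reaction S)} {comp : S → I} {J : Set I}
    {π : RPath S} {R : Reaction S} (hpath : IsPath (↑P) π) (hcomp : compSet comp R ⊆ J) {i : ℕ}
    (hi : i ∈ occurrences π R) : keptStep comp J π i := by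
  obtain ⟨hlt, hlab⟩ := hi
  obtain ⟨R', hlab', -, hstep⟩ := hpath i hlt
  obtain rfl : R = R' := Option.some_injective _ (hlab.symm.trans hlab')
  obtain ⟨c, hc⟩ := compSet_nonempty_of_step comp hstep
  exact ⟨hlt, R, hlab, c, hc, hcomp hc⟩

section projPath

variable (P : Finset (Reaction S)) (comp : S → I) (J : Set I) (π : RPath S)

theorem projPath_len : (projPath P comp J π).len = {i | keptStep comp J π i}.encard := by
  by_cases hinf : {i | keptStep comp J π i}.Infinite
  · rw [projPath, if_pos hinf, hinf.encard_eq]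
  · rw [projPath, if_neg hinf]
    exact (Set.not_infinite.mp hinf).cast_ncard_eq

theorem projPath_label_of_lt {n : ℕ} (hn : (n : ℕ∞) < (projPath P comp J π).len) :
    (projPath P comp J π).label n = π.label (Nat.nth (keptStep comp J π) n) := by
  by_cases hinf : {i | keptStep comp J π i}.Infinite
  · rw [projPath, if_pos hinf]
  · rw [projPath, if_neg hinf] at hn ⊢
    exact if_pos (Nat.cast_lt.mp hn)

theorem occurrences_projPath (R : Reaction S) :
    occurrences (projPath P comp J π) R =
      {n : ℕ | (n : ℕ∞) < {i | keptStep comp J π i}.encard ∧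
        Nat.nth (keptStep comp J π) n ∈ occurrences π R} := by
  ext n
  have hlen := projPath_len P comp J π
  refine ⟨fun ⟨hn, hlab⟩ => ?_, fun ⟨hn, _, hlab⟩ => ?_⟩
  · rw [projPath_label_of_lt P comp J π hn] at hlab
    rw [hlen] at hn
    exact ⟨hn, (Nat.nth_mem_of_lt_encard hn).1, hlab⟩
  · rw [← hlen] at hn
    exact ⟨hn, (projPath_label_of_lt P comp J π hn).trans hlab⟩

end projPath

theorem occurrences_preserved_general {S I : Type*} (P : Finset (Reaction S)) (comp : S → I)
    (J : Set I) (π : RPath S) (hpath : IsPath (↑P) π) (R : Reaction S)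
    (hcomp : compSet comp R ⊆ J) :
    Nonempty ({i : ℕ | (i : ℕ∞) < π.len ∧ π.label i = some R} ≃o
      {i : ℕ | (i : ℕ∞) < (projPath P comp J π).len ∧
        (projPath P comp J π).label i = some R}) ∧
    ({i : ℕ | (i : ℕ∞) < π.len ∧ π.label i = some R}.Infinite ↔
      {i : ℕ | (i : ℕ∞) < (projPath P comp J π).len ∧
        (projPath P comp J π).label i = some R}.Infinite) := by
  change Nonempty (occurrences π R ≃o occurrences (projPath P comp J π) R) ∧
    ((occurrences π R).Infinite ↔ (occurrences (projPath P comp J π) R).Infinite)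
  let e := (Nat.nthOrderIsoOfLE (q := (· ∈ occurrences π R))
    fun _ => keptStep_of_mem_occurrences hpath hcomp).symm
  rw [occurrences_projPath]
  exact ⟨⟨e⟩, Set.infinite_coe_iff.symm.trans
    (e.toEquiv.infinite_iff.trans Set.infinite_coe_iff)⟩

/-- **Occurrences of internal reactions are preserved by path projection.**  For
`R ∈ P` with all components in `J` and any path `π` of `LTS(P)`, the steps of `π`
labelled `R` are in order-preserving bijection with the steps of `π↾J` labelled `R`;
in particular there are infinitely many of the former iff there are infinitely many
of the latter. -/
theorem occurrences_preserved {S I : Type*} (P : Finset (Reaction S)) (comp : S → I)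
    (J : Set I) (π : RPath S) (hpath : IsPath (↑P) π) (R : Reaction S) (hR : R ∈ P)
    (hcomp : compSet comp R ⊆ J) :
    Nonempty ({i : ℕ | (i : ℕ∞) < π.len ∧ π.label i = some R} ≃o
      {i : ℕ | (i : ℕ∞) < (projPath P comp J π).len ∧
        (projPath P comp J π).label i = some R}) ∧
    ({i : ℕ | (i : ℕ∞) < π.len ∧ π.label i = some R}.Infinite ↔
      {i : ℕ | (i : ℕ∞) < (projPath P comp J π).len ∧
        (projPath P comp J π).label i = some R}.Infinite) :=
  occurrences_preserved_general P comp J π hpath R hcomp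
end

section
/- Step simulation for internal reactions: Let P be a pathway, comp : species(P) → I a component map, J ⊆ I, and R ∈ P with comp(R) ⊆ J (so R ∈ PR). If s →_R s' is a transition of LTS(P), then s↾J →_R s'↾J is a transition of LTS_α(P↾J). -/
open scoped Classical

variable {S I : Type*}

namespace Step

variable {R : Reaction S} {s s' : Set S}

theorem pro_not_subset (h : Step R s s') : ¬ (↑R.pro : Set S) ⊆ s := by
  rcases h with ⟨_, h, _⟩ | ⟨_, h, _⟩ <;> exact h

theorem speciesSet_nonempty (h : Step R s s') : R.speciesSet.Nonempty := by
  obtain ⟨x, hx, -⟩ := Set.not_subset.mp h.pro_not_subset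
  exact ⟨x, Or.inl (Or.inr hx)⟩

/-- A step only reads and writes the species of its reaction, so it survives restricting both
states to any set of species containing them. -/
theorem inter {T : Set S} (hT : R.speciesSet ⊆ T) (h : Step R s s') :
    Step R (s ∩ T) (s' ∩ T) := by
  have hre : (↑R.re : Set S) ⊆ T := fun _ hy => hT (Or.inl (Or.inl hy))
  have hpro : (↑R.pro : Set S) ⊆ T := fun _ hy => hT (Or.inl (Or.inr hy))
  have hcat : (↑R.cat : Set S) ⊆ T := fun _ hy => hT (Or.inr hy)
  have hpro_not : ¬ (↑R.pro : Set S) ⊆ s ∩ T := fun hsub =>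
    h.pro_not_subset (hsub.trans Set.inter_subset_left)
  rcases h with ⟨hre_s, -, hcat_ne, hcat_s, rfl⟩ | ⟨hre_s, -, hcat_eq, rfl⟩
  · refine Or.inl ⟨Set.subset_inter hre_s hre, hpro_not, hcat_ne, Set.subset_inter hcat_s hcat, ?_⟩
    rw [Set.union_inter_distrib_right, Set.inter_sdiff_right_comm, Set.inter_eq_left.mpr hpro]
  · refine Or.inr ⟨Set.subset_inter hre_s hre, hpro_not, hcat_eq, ?_⟩
    rw [Set.union_inter_distrib_right, Set.inter_eq_left.mpr hpro]

end Step

section Components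

variable {P : Finset (Reaction S)} {comp : S → I} {J : Set I} {R : Reaction S}

theorem speciesSet_subset_speciesJ (hR : R ∈ P) (hJ : (compSet comp R ∩ J).Nonempty) :
    R.speciesSet ⊆ speciesJ P comp J :=
  fun _ hy => ⟨R, hR, hJ, hy⟩

theorem compSet_inter_nonempty_of_subset (hcomp : compSet comp R ⊆ J)
    (hR : R.speciesSet.Nonempty) : (compSet comp R ∩ J).Nonempty := by
  obtain ⟨x, hx⟩ := hR
  exact ⟨comp x, ⟨x, hx, rfl⟩, hcomp ⟨x, hx, rfl⟩⟩

end Components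

/-- **Step simulation for internal reactions.**  If `R ∈ P` has all its components
in `J` (so `R ∈ PR`) and `s →_R s'` is a transition of `LTS(P)`, then
`s↾J →_R s'↾J` is a transition of `LTS_α(P↾J) = LTS(PR ∪ AR)`. -/
theorem step_simulation {S I : Type*} (P : Finset (Reaction S)) (comp : S → I)
    (J : Set I) (R : Reaction S) (hR : R ∈ P) (hcomp : compSet comp R ⊆ J)
    (s s' : Set S) (hstep : Step R s s') :
    R ∈ PR P comp J ∪ AR P comp J ∧
    Step R (projSet P comp J s) (projSet P comp J s') :=
  ⟨Or.inl ⟨hR, hcomp⟩, hstep.inter <| speciesSet_subset_speciesJ hR <|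
    compSet_inter_nonempty_of_subset hcomp hstep.speciesSet_nonempty⟩
end
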